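/- Let A be the n × n tridiagonal matrix over a commutative ring with a_{i,j} = 1 if |i - j| = 1 and 0 otherwise, with n = 2^m - 1. Then the (x, y) entry of A^k, reduced mod 2, is 0 for all k ≥ n and all x, y. -/

import Mathlib

/-!
Let `B` be the adjacency matrix of the path on `n` vertices and `e₀, …, e_{n-1}` the standard
basis. Since `B eᵢ = e_{i-1} + e_{i+1}` (with `e_{-1} = e_n = 0`), the recurrence
`S_{i+1} = X S_i - S_{i-1}` of the rescaled Chebyshev polynomials gives `S_i(B) e₀ = eᵢ` for
`i < n` and `S_n(B) e₀ = 0`; as `S_n(B)` commutes with every `S_i(B)`, it kills every `eᵢ`, so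
`S_n(B) = 0`. In characteristic `2` we have `X S_{j-1} = C_j` and `C_{2j} = C_j²` for the
rescaled Chebyshev polynomials `C_j` of the first kind, hence `S_{2^m-1} = X^{2^m-1}` and
`B^{2^m-1} = 0` over `R ⧸ (2)`.
-/

open Polynomial Polynomial.Chebyshev Matrix SimpleGraph

namespace Polynomial.Chebyshev

variable {R : Type*} [CommRing R]

theorem C_two_pow_of_two_eq_zero (h2 : (2 : R[X]) = 0) (m : ℕ) : C R (2 ^ m) = X ^ 2 ^ m := by
  induction m with
  | zero => simp
  | succ m ih =>
    have h := C_mul_C R (2 ^ m) (2 ^ m)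
    rw [sub_self, C_zero, h2, add_zero, ← two_mul, ← pow_succ', ih] at h
    rw [← h, ← pow_add, ← two_mul, pow_succ']

theorem X_mul_S_of_two_eq_zero (h2 : (2 : R[X]) = 0) (n : ℤ) : X * S R n = C R (n + 1) := by
  have h := S_eq_X_mul_S_add_C R n
  rw [h2, zero_mul, eq_comm, add_eq_zero_iff_eq_neg] at h
  rw [h, neg_eq_iff_add_eq_zero, ← two_mul, h2, zero_mul]

theorem S_two_pow_sub_one_of_two_eq_zero (h2 : (2 : R[X]) = 0) (m : ℕ) :
    S R ((2 ^ m - 1 : ℕ) : ℤ) = X ^ (2 ^ m - 1) := by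
  have hm : ((2 ^ m - 1 : ℕ) : ℤ) + 1 = 2 ^ m := by
    rw [Nat.cast_sub Nat.one_le_two_pow]
    push_cast
    ring
  refine isRegular_X.left (?_ : X * _ = X * _)
  rw [X_mul_S_of_two_eq_zero h2, hm, C_two_pow_of_two_eq_zero h2, ← pow_succ',
    Nat.sub_add_cancel Nat.one_le_two_pow]

end Polynomial.Chebyshev

section StdVec

variable {R : Type*} [CommRing R] {n : ℕ}

/-- `eᵢ`, which is `0` for `i ∉ [0, n)`, so that `e_{-1} = e_n = 0` absorb both ends of the path. -/
def stdVec (n : ℕ) (i : ℤ) : Fin n → R := fun x => if (x : ℤ) = i then 1 else 0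

theorem stdVec_val_eq_single (y : Fin n) : (stdVec n y : Fin n → R) = Pi.single y 1 := by
  ext x
  simp [stdVec, Pi.single_apply, Fin.ext_iff]

theorem stdVec_eq_zero_of_le {i : ℕ} (hi : n ≤ i) : (stdVec n i : Fin n → R) = 0 := by
  ext x
  simp only [stdVec, Nat.cast_inj, Pi.zero_apply]
  exact if_neg (by omega)

end StdVec

namespace SimpleGraph

variable {R : Type*} [CommRing R] {n : ℕ}

instance (n : ℕ) : DecidableRel (pathGraph n).Adj :=
  fun _ _ => decidable_of_iff _ pathGraph_adj.symm

theorem eq_pathGraph_adjMatrix {A : Matrix (Fin n) (Fin n) R}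
    (hA : ∀ i j, A i j = if ((i : ℤ) - (j : ℤ)).natAbs = 1 then 1 else 0) :
    A = (pathGraph n).adjMatrix R := by
  ext i j
  rw [hA, adjMatrix_apply]
  exact if_congr (by rw [pathGraph_adj]; omega) rfl rfl

theorem pathGraph_adjMatrix_mulVec_stdVec {i : ℕ} (hi : i < n) :
    (pathGraph n).adjMatrix R *ᵥ stdVec n i = stdVec n (i - 1) + stdVec n (i + 1) := by
  have hi' : (stdVec n i : Fin n → R) = Pi.single ⟨i, hi⟩ 1 :=
    stdVec_val_eq_single (⟨i, hi⟩ : Fin n)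
  ext x
  simp only [hi', mulVec_single_one, col_apply, adjMatrix_apply, pathGraph_adj, Pi.add_apply,
    stdVec]
  split_ifs <;> first | omega | simp

theorem aeval_S_mulVec_stdVec_zero {i : ℕ} (hi : i ≤ n) :
    aeval ((pathGraph n).adjMatrix R) (S R i) *ᵥ stdVec n 0 = stdVec n i := by
  set B := (pathGraph n).adjMatrix R
  suffices h : aeval B (S R (i - 1)) *ᵥ stdVec n 0 = stdVec n (i - 1) ∧
      aeval B (S R i) *ᵥ stdVec n 0 = stdVec n i from h.2
  induction i with
  | zero =>
    constructor
    · ext x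
      simp [stdVec]
    · simp
  | succ i ih =>
    obtain ⟨ih₁, ih₂⟩ := ih (by omega)
    refine ⟨by simpa using ih₂, ?_⟩
    push_cast
    rw [S_add_one, map_sub, map_mul, aeval_X, sub_mulVec, ← mulVec_mulVec, ih₂, ih₁,
      pathGraph_adjMatrix_mulVec_stdVec (by omega), add_sub_cancel_left]

theorem aeval_pathGraph_adjMatrix_S : aeval ((pathGraph n).adjMatrix R) (S R n) = 0 := by
  set B := (pathGraph n).adjMatrix R
  ext x y
  have hcol : aeval B (S R n) *ᵥ stdVec n y = 0 := by
    rw [← aeval_S_mulVec_stdVec_zero y.is_lt.le, mulVec_mulVec, ← map_mul, mul_comm, map_mul,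
      ← mulVec_mulVec, aeval_S_mulVec_stdVec_zero le_rfl, stdVec_eq_zero_of_le le_rfl,
      mulVec_zero]
  simpa [stdVec_val_eq_single, mulVec_single_one] using congrFun hcol x

theorem pathGraph_adjMatrix_pow_eq_zero (h2 : (2 : R) = 0) {m k : ℕ} (hk : 2 ^ m - 1 ≤ k) :
    (pathGraph (2 ^ m - 1)).adjMatrix R ^ k = 0 := by
  have h2' : (2 : R[X]) = 0 := by rw [← map_ofNat Polynomial.C, h2, map_zero]
  have hB : (pathGraph (2 ^ m - 1)).adjMatrix R ^ (2 ^ m - 1) = 0 := by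
    rw [← aeval_X_pow (R := R) (x := (pathGraph (2 ^ m - 1)).adjMatrix R),
      ← S_two_pow_sub_one_of_two_eq_zero h2', aeval_pathGraph_adjMatrix_S]
  obtain ⟨j, rfl⟩ := Nat.exists_eq_add_of_le hk
  rw [pow_add, hB, zero_mul]

end SimpleGraph

theorem pathGraph_adjMatrix_pow_entry_mem_span_two_general
    (R : Type*) [CommRing R] (m : ℕ) (n : ℕ) (hn : n = 2 ^ m - 1)
    (A : Matrix (Fin n) (Fin n) R)
    (hA : ∀ i j, A i j = if ((i : ℤ) - (j : ℤ)).natAbs = 1 then 1 else 0)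
    (k : ℕ) (hk : n ≤ k) (x y : Fin n) :
    (A ^ k) x y ∈ Ideal.span {(2 : R)} := by
  subst hn
  let π := Ideal.Quotient.mk (Ideal.span {(2 : R)})
  have h2 : (2 : R ⧸ Ideal.span {(2 : R)}) = 0 :=
    Ideal.Quotient.eq_zero_iff_mem.mpr (Ideal.mem_span_singleton_self 2)
  have hAπ : A.map π = (pathGraph (2 ^ m - 1)).adjMatrix _ :=
    eq_pathGraph_adjMatrix fun i j => by simp [hA, apply_ite π]
  rw [← Ideal.Quotient.eq_zero_iff_mem, ← map_apply (f := π), Matrix.map_pow, hAπ,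
    pathGraph_adjMatrix_pow_eq_zero h2 hk, Matrix.zero_apply]

/-- Let `A` be the `n × n` tridiagonal 0/1 matrix over a commutative ring `R`, with
`n = 2^m - 1`. For `k ≥ n`, every entry of `A ^ k` reduces to zero mod 2, i.e. lies in
the ideal generated by `2`. -/
theorem pathGraph_adjMatrix_pow_entry_mem_span_two
    (R : Type*) [CommRing R] (m : ℕ) (hm : 0 < m) (n : ℕ) (hn : n = 2 ^ m - 1)
    (A : Matrix (Fin n) (Fin n) R)
    (hA : ∀ i j, A i j = if ((i : ℤ) - (j : ℤ)).natAbs = 1 then 1 else 0)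
    (k : ℕ) (hk : n ≤ k) (x y : Fin n) :
    (A ^ k) x y ∈ Ideal.span {(2 : R)} :=
  pathGraph_adjMatrix_pow_entry_mem_span_two_general R m n hn A hA k hk x y
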